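/- Let A be a real m×n matrix with m ≥ n, rank(A) = n, all rows nonzero, and Ax = b, and let σ_min > 0 satisfy ‖A v‖ ≥ σ_min·‖v‖ for all v ∈ ℝ^n. Fix x_0 ∈ ℝ^n and k ∈ ℕ, and suppose that no choice of at most k successive projections starting from x_0 produces the exact solution x. Then E[ log(‖x_k − x‖²) ] ≤ k·log(1 − σ_min²/‖A‖_F²) + log(‖x_0 − x‖²), where E denotes expectation for the random Kaczmarz process of length k. -/

import Mathlib

noncomputable section

/-- The `i`-th row of `A` as a vector in Euclidean space. -/
def rowv {m n : ℕ} (A : Matrix (Fin m) (Fin n) ℝ) (i : Fin m) : EuclideanSpace ℝ (Fin n) :=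
  WithLp.toLp 2 (fun j => A i j)

/-- Matrix-vector multiplication, landing in Euclidean space. -/
def mulV {m n : ℕ} (A : Matrix (Fin m) (Fin n) ℝ) (v : EuclideanSpace ℝ (Fin n)) :
    EuclideanSpace ℝ (Fin m) := WithLp.toLp 2 (fun i => ∑ j, A i j * v j)

/-- The square of the Frobenius norm `‖A‖_F²`. -/
def frobSq {m n : ℕ} (A : Matrix (Fin m) (Fin n) ℝ) : ℝ := ∑ i, ∑ j, (A i j) ^ 2

/-- The operator norm `‖A‖` (ℓ² → ℓ²). -/
def opN {m n : ℕ} (A : Matrix (Fin m) (Fin n) ℝ) : ℝ :=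
  ‖LinearMap.toContinuousLinearMap (Matrix.toEuclideanLin A)‖

/-- Orthogonal projection of `w` onto the hyperplane `{v : ⟨a_i, v⟩ = b_i}`. -/
def proj {m n : ℕ} (A : Matrix (Fin m) (Fin n) ℝ) (b : EuclideanSpace ℝ (Fin m)) (i : Fin m)
    (w : EuclideanSpace ℝ (Fin n)) : EuclideanSpace ℝ (Fin n) :=
  w + ((b i - inner (𝕜 := ℝ) (rowv A i) w) / ‖rowv A i‖ ^ 2) • rowv A i

/-- The Kaczmarz trajectory: `traj A b x0 ω j` is `x_j(ω) = π_{ω_j} ⋯ π_{ω_1} x_0`. -/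
def traj {m n k : ℕ} (A : Matrix (Fin m) (Fin n) ℝ) (b : EuclideanSpace ℝ (Fin m))
    (x0 : EuclideanSpace ℝ (Fin n)) (ω : Fin k → Fin m) : ℕ → EuclideanSpace ℝ (Fin n)
  | 0 => x0
  | j + 1 => if h : j < k then proj A b (ω ⟨j, h⟩) (traj A b x0 ω j) else traj A b x0 ω j

/-- The weight `∏_j ‖a_{ω_j}‖²/‖A‖_F²` of an index sequence `ω` for the random Kaczmarz
process. -/
def wt {m n k : ℕ} (A : Matrix (Fin m) (Fin n) ℝ) (ω : Fin k → Fin m) : ℝ :=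
  ∏ j, ‖rowv A (ω j)‖ ^ 2 / frobSq A

end

/-!
Pythagoras for the projection onto the `i`-th hyperplane,
`‖π_i y - x‖² = ‖y - x‖² - ⟨a_i, y - x⟩² / ‖a_i‖²`, averaged with the weights
`‖a_i‖² / ‖A‖_F²` gives `E ‖π y - x‖² = ‖y - x‖² - ‖A (y - x)‖² / ‖A‖_F²
≤ (1 - σ_min² / ‖A‖_F²) ‖y - x‖²`. Jensen's inequality for the concave logarithm turns this
into the one-step bound `E log ‖π y - x‖² ≤ log (1 - σ_min² / ‖A‖_F²) + log ‖y - x‖²`.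
Conditioning on the first index, the rest of the process started at `x_0` is the process of
length `k - 1` started at `π_c x_0`, so the bound follows by induction on `k`. That no
trajectory reaches `x` keeps every logarithm finite and also makes the factor
`1 - σ_min² / ‖A‖_F²` positive.
-/

open Finset Real
open scoped InnerProductSpace

noncomputable def rowWeight {m n : ℕ} (A : Matrix (Fin m) (Fin n) ℝ) (i : Fin m) : ℝ :=
  ‖rowv A i‖ ^ 2 / frobSq A

lemma wt_eq_prod_rowWeight {m n k : ℕ} (A : Matrix (Fin m) (Fin n) ℝ) (ω : Fin k → Fin m) :
    wt A ω = ∏ j, rowWeight A (ω j) := rfl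

lemma sum_mul_log_le_log_sum_mul {ι : Type*} {s : Finset ι} {w q : ι → ℝ}
    (hw : ∀ i ∈ s, 0 ≤ w i) (hsum : ∑ i ∈ s, w i = 1) (hq : ∀ i ∈ s, 0 < q i) :
    ∑ i ∈ s, w i * log (q i) ≤ log (∑ i ∈ s, w i * q i) := by
  simpa using strictConcaveOn_log_Ioi.concaveOn.le_map_sum hw hsum hq

section Kaczmarz

variable {m n : ℕ} (A : Matrix (Fin m) (Fin n) ℝ)

lemma frobSq_eq_sum_norm_rowv_sq : frobSq A = ∑ i, ‖rowv A i‖ ^ 2 := by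
  simp [frobSq, EuclideanSpace.norm_sq_eq, rowv]

lemma frobSq_pos [Nonempty (Fin m)] (hrows : ∀ i, rowv A i ≠ 0) : 0 < frobSq A := by
  rw [frobSq_eq_sum_norm_rowv_sq]
  exact sum_pos (fun i _ => by simpa [sq_pos_iff] using hrows i) univ_nonempty

lemma rowWeight_pos (hrows : ∀ i, rowv A i ≠ 0) (hF : 0 < frobSq A) (i : Fin m) :
    0 < rowWeight A i := by
  have := hrows i
  unfold rowWeight
  positivity

lemma sum_rowWeight (hF : frobSq A ≠ 0) : ∑ i, rowWeight A i = 1 := by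
  simp only [rowWeight]
  rw [← sum_div, ← frobSq_eq_sum_norm_rowv_sq, div_self hF]

lemma sum_wt_mul_eq_sum_cons {k : ℕ} (g : (Fin (k + 1) → Fin m) → ℝ) :
    ∑ ω, wt A ω * g ω = ∑ c, rowWeight A c * ∑ ω : Fin k → Fin m, wt A ω * g (Fin.cons c ω) := by
  rw [← (Fin.consEquiv fun _ => Fin m).sum_comp, Fintype.sum_prod_type]
  simp only [Fin.consEquiv_apply, wt_eq_prod_rowWeight, Fin.prod_univ_succ, Fin.cons_zero,
    Fin.cons_succ, mul_sum,
    mul_assoc]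
  rfl

lemma mulV_apply (v : EuclideanSpace ℝ (Fin n)) (i : Fin m) :
    mulV A v i = ⟪rowv A i, v⟫_ℝ := by
  simp [mulV, rowv, PiLp.inner_apply, mul_comm]

lemma norm_mulV_sq (v : EuclideanSpace ℝ (Fin n)) :
    ‖mulV A v‖ ^ 2 = ∑ i, ⟪rowv A i, v⟫_ℝ ^ 2 := by
  simp [EuclideanSpace.norm_sq_eq, mulV_apply]

variable {A} {x : EuclideanSpace ℝ (Fin n)} {b : EuclideanSpace ℝ (Fin m)}

lemma proj_sub (hAx : mulV A x = b) (i : Fin m) (y : EuclideanSpace ℝ (Fin n)) :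
    proj A b i y - x = (y - x) - (⟪rowv A i, y - x⟫_ℝ / ‖rowv A i‖ ^ 2) • rowv A i := by
  have hbi : b i = ⟪rowv A i, x⟫_ℝ := by rw [← hAx, mulV_apply]
  simp only [proj, hbi, inner_sub_right]
  module

lemma norm_proj_sub_sq (hAx : mulV A x = b) {i : Fin m} (hrow : rowv A i ≠ 0)
    (y : EuclideanSpace ℝ (Fin n)) :
    ‖proj A b i y - x‖ ^ 2 = ‖y - x‖ ^ 2 - ⟪rowv A i, y - x⟫_ℝ ^ 2 / ‖rowv A i‖ ^ 2 := by
  have ha : ‖rowv A i‖ ≠ 0 := norm_ne_zero_iff.2 hrow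
  rw [proj_sub hAx, norm_sub_sq_real, norm_smul, real_inner_smul_right, mul_pow,
    real_inner_comm (y - x), Real.norm_eq_abs, sq_abs]
  field_simp
  ring

lemma sum_rowWeight_mul_norm_proj_sub_sq (hAx : mulV A x = b) (hrows : ∀ i, rowv A i ≠ 0)
    (hF : frobSq A ≠ 0) (y : EuclideanSpace ℝ (Fin n)) :
    ∑ i, rowWeight A i * ‖proj A b i y - x‖ ^ 2
      = ‖y - x‖ ^ 2 - ‖mulV A (y - x)‖ ^ 2 / frobSq A := by
  have hterm (i : Fin m) : rowWeight A i * ‖proj A b i y - x‖ ^ 2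
      = rowWeight A i * ‖y - x‖ ^ 2 - ⟪rowv A i, y - x⟫_ℝ ^ 2 / frobSq A := by
    have ha : ‖rowv A i‖ ≠ 0 := norm_ne_zero_iff.2 (hrows i)
    rw [norm_proj_sub_sq hAx (hrows i), rowWeight]
    field_simp
  rw [sum_congr rfl fun i _ => hterm i, sum_sub_distrib, ← sum_mul, sum_rowWeight A hF,
    one_mul, ← sum_div, norm_mulV_sq]

lemma sum_rowWeight_mul_log_norm_proj_sub_sq_le [Nonempty (Fin m)] (hAx : mulV A x = b)
    (hrows : ∀ i, rowv A i ≠ 0) {σmin : ℝ} (hσ : 0 ≤ σmin)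
    (hlow : ∀ v : EuclideanSpace ℝ (Fin n), σmin * ‖v‖ ≤ ‖mulV A v‖)
    {y : EuclideanSpace ℝ (Fin n)} (hy : y ≠ x) (hproj : ∀ i, proj A b i y ≠ x) :
    ∑ i, rowWeight A i * log (‖proj A b i y - x‖ ^ 2)
      ≤ log (1 - σmin ^ 2 / frobSq A) + log (‖y - x‖ ^ 2) := by
  have hF := frobSq_pos A hrows
  have hq (i : Fin m) : 0 < ‖proj A b i y - x‖ ^ 2 := by
    simpa [sq_pos_iff, sub_eq_zero] using hproj i
  have hy' : 0 < ‖y - x‖ ^ 2 := by simpa [sq_pos_iff, sub_eq_zero] using hy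
  have hmean_pos : 0 < ∑ i, rowWeight A i * ‖proj A b i y - x‖ ^ 2 :=
    sum_pos (fun i _ => mul_pos (rowWeight_pos A hrows hF i) (hq i)) univ_nonempty
  have hmean_le : ∑ i, rowWeight A i * ‖proj A b i y - x‖ ^ 2
      ≤ (1 - σmin ^ 2 / frobSq A) * ‖y - x‖ ^ 2 := by
    have hlow_sq : σmin ^ 2 * ‖y - x‖ ^ 2 ≤ ‖mulV A (y - x)‖ ^ 2 := by
      rw [← mul_pow]
      exact pow_le_pow_left₀ (by positivity) (hlow _) 2
    rw [sum_rowWeight_mul_norm_proj_sub_sq hAx hrows hF.ne', sub_mul, one_mul,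
      div_mul_eq_mul_div]
    gcongr
  have hfactor : 0 < 1 - σmin ^ 2 / frobSq A :=
    pos_of_mul_pos_left (hmean_pos.trans_le hmean_le) hy'.le
  calc _ ≤ log (∑ i, rowWeight A i * ‖proj A b i y - x‖ ^ 2) :=
        sum_mul_log_le_log_sum_mul (fun i _ => (rowWeight_pos A hrows hF i).le)
          (sum_rowWeight A hF.ne') (fun i _ => hq i)
    _ ≤ log ((1 - σmin ^ 2 / frobSq A) * ‖y - x‖ ^ 2) := log_le_log hmean_pos hmean_le
    _ = _ := log_mul hfactor.ne' hy'.ne'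

lemma traj_cons_succ {k : ℕ} (x0 : EuclideanSpace ℝ (Fin n)) (c : Fin m) (ω : Fin k → Fin m)
    (j : ℕ) :
    traj A b x0 (Fin.cons c ω : Fin (k + 1) → Fin m) (j + 1) = traj A b (proj A b c x0) ω j := by
  induction j with
  | zero => simp [traj]
  | succ j ih =>
    rw [traj.eq_2, ih, traj.eq_2]
    by_cases hj : j < k
    · simp only [hj, Nat.add_lt_add_iff_right, dite_true]
      rfl
    · simp [hj]

theorem sum_wt_mul_log_norm_traj_sub_sq_le [Nonempty (Fin m)] (hAx : mulV A x = b)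
    (hrows : ∀ i, rowv A i ≠ 0) {σmin : ℝ} (hσ : 0 ≤ σmin)
    (hlow : ∀ v : EuclideanSpace ℝ (Fin n), σmin * ‖v‖ ≤ ‖mulV A v‖)
    (k : ℕ) (x0 : EuclideanSpace ℝ (Fin n))
    (hne : ∀ ω : Fin k → Fin m, ∀ j ≤ k, traj A b x0 ω j ≠ x) :
    ∑ ω : Fin k → Fin m, wt A ω * log (‖traj A b x0 ω k - x‖ ^ 2) ≤
      k * log (1 - σmin ^ 2 / frobSq A) + log (‖x0 - x‖ ^ 2) := by
  induction k generalizing x0 with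
  | zero => simp [wt, traj]
  | succ k ih =>
    set L := log (1 - σmin ^ 2 / frobSq A)
    have hF := frobSq_pos A hrows
    have hnext (c : Fin m) :
        ∑ ω : Fin k → Fin m, wt A ω * log (‖traj A b (proj A b c x0) ω k - x‖ ^ 2)
          ≤ k * L + log (‖proj A b c x0 - x‖ ^ 2) :=
      ih _ fun ω j hj => by
        rw [← traj_cons_succ]
        exact hne _ _ (by omega)
    have hstep : ∑ c, rowWeight A c * log (‖proj A b c x0 - x‖ ^ 2)
        ≤ L + log (‖x0 - x‖ ^ 2) := by
      refine sum_rowWeight_mul_log_norm_proj_sub_sq_le hAx hrows hσ hlow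
        (hne (fun _ => Classical.arbitrary _) 0 (Nat.zero_le _)) fun c => ?_
      have := hne (Fin.cons c fun _ => c) 1 (by omega)
      rwa [traj_cons_succ] at this
    calc _ = ∑ c, rowWeight A c *
          ∑ ω : Fin k → Fin m, wt A ω * log (‖traj A b (proj A b c x0) ω k - x‖ ^ 2) := by
          rw [sum_wt_mul_eq_sum_cons]
          simp only [traj_cons_succ]
      _ ≤ ∑ c, rowWeight A c * (k * L + log (‖proj A b c x0 - x‖ ^ 2)) := by
          gcongr with c
          exacts [(rowWeight_pos A hrows hF c).le, hnext c]
      _ = k * L + ∑ c, rowWeight A c * log (‖proj A b c x0 - x‖ ^ 2) := by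
          simp only [mul_add, sum_add_distrib, ← sum_mul, sum_rowWeight A hF.ne', one_mul]
      _ ≤ k * L + (L + log (‖x0 - x‖ ^ 2)) := by gcongr
      _ = _ := by push_cast; ring

end Kaczmarz

theorem log_strohmer_vershynin_general {m n : ℕ} (A : Matrix (Fin m) (Fin n) ℝ)
    (hrows : ∀ i, rowv A i ≠ 0)
    (x : EuclideanSpace ℝ (Fin n)) (b : EuclideanSpace ℝ (Fin m)) (hAx : mulV A x = b)
    (σmin : ℝ) (hσ : 0 < σmin) (hlow : ∀ v : EuclideanSpace ℝ (Fin n), σmin * ‖v‖ ≤ ‖mulV A v‖)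
    (x0 : EuclideanSpace ℝ (Fin n)) (k : ℕ)
    (hne : ∀ ω : Fin k → Fin m, ∀ j ≤ k, traj A b x0 ω j ≠ x) :
    ∑ ω : Fin k → Fin m, wt A ω * Real.log (‖traj A b x0 ω k - x‖ ^ 2) ≤
      (k : ℝ) * Real.log (1 - σmin ^ 2 / frobSq A) + Real.log (‖x0 - x‖ ^ 2) := by
  rcases Nat.eq_zero_or_pos m with rfl | hm
  · have htrivial (v : EuclideanSpace ℝ (Fin n)) : v = 0 := by
      have := hlow v
      rw [Subsingleton.elim (mulV A v) 0, norm_zero] at this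
      exact norm_le_zero_iff.1 (nonpos_of_mul_nonpos_right this hσ)
    simp [htrivial (x0 - x), htrivial (_ - x), frobSq]
  · have : Nonempty (Fin m) := Fin.pos_iff_nonempty.1 hm
    exact sum_wt_mul_log_norm_traj_sub_sq_le hAx hrows hσ.le hlow k x0 hne

/-- **Logarithmic Strohmer–Vershynin bound.** If `σ_min > 0` is a lower bound for `A`,
i.e. `‖Av‖ ≥ σ_min ‖v‖` for all `v`, and no choice of at most `k` projections from `x₀`
gives the exact solution, then
`E log(‖x_k − x‖²) ≤ k log(1 − σ_min²/‖A‖_F²) + log(‖x₀ − x‖²)`. -/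
theorem log_strohmer_vershynin {m n : ℕ} (A : Matrix (Fin m) (Fin n) ℝ) (hmn : m ≥ n)
    (hrank : A.rank = n) (hrows : ∀ i, rowv A i ≠ 0)
    (x : EuclideanSpace ℝ (Fin n)) (b : EuclideanSpace ℝ (Fin m)) (hAx : mulV A x = b)
    (σmin : ℝ) (hσ : 0 < σmin) (hlow : ∀ v : EuclideanSpace ℝ (Fin n), σmin * ‖v‖ ≤ ‖mulV A v‖)
    (x0 : EuclideanSpace ℝ (Fin n)) (k : ℕ)
    (hne : ∀ ω : Fin k → Fin m, ∀ j ≤ k, traj A b x0 ω j ≠ x) :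
    ∑ ω : Fin k → Fin m, wt A ω * Real.log (‖traj A b x0 ω k - x‖ ^ 2) ≤
      (k : ℝ) * Real.log (1 - σmin ^ 2 / frobSq A) + Real.log (‖x0 - x‖ ^ 2) :=
  log_strohmer_vershynin_general A hrows x b hAx σmin hσ hlow x0 k hne
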